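/- arXiv:2510.02636 — 2 statements merged into one kernel-verified Lean document; each statement's English description precedes it below -/
import Mathlib

section
/- If v̄ : ℝ → ℝ is differentiable, 0 ≤ v̄(t) < 1, and v̄'(t) + (1 - v̄(t))² ≤ 0 for all t ∈ [t₀, t₁], then t₁ - t₀ ≤ v̄(t₀)/(1 - v̄(t₀)). -/
/-!
With `w = 1 - v̄` the hypothesis reads `w' ≥ w²`, i.e. `(1/w)' ≤ -1`: the quantity `1/w` drops at
least at unit rate. Since `0 ≤ v̄` keeps `1/w ≥ 1`, the interval can last at most
`1/w(t₀) - 1 = v̄(t₀)/(1 - v̄(t₀))`.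
-/

theorem antitoneOn_inv_add_id_of_sq_le_deriv {s : Set ℝ} (hs : Convex ℝ s) {w w' : ℝ → ℝ}
    (hd : ∀ t ∈ s, HasDerivWithinAt w (w' t) s t) (hw : ∀ t ∈ s, w t ≠ 0)
    (hineq : ∀ t ∈ s, w t ^ 2 ≤ w' t) :
    AntitoneOn (fun t => (w t)⁻¹ + t) s := by
  have hderiv : ∀ t ∈ s,
      HasDerivWithinAt (fun t => (w t)⁻¹ + t) (-w' t / w t ^ 2 + 1) s t := fun t ht =>
    ((hd t ht).inv (hw t ht)).add (hasDerivWithinAt_id t s)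
  refine antitoneOn_of_hasDerivWithinAt_nonpos hs
    (fun t ht => (hderiv t ht).continuousWithinAt)
    (fun t ht => (hderiv t (interior_subset ht)).mono interior_subset) fun t ht => ?_
  have ht := interior_subset ht
  have hsq : 0 < w t ^ 2 := pow_two_pos_of_ne_zero (hw t ht)
  rw [neg_div, neg_add_nonpos_iff, one_le_div hsq]
  exact hineq t ht

/-- If `v̄` is differentiable on `[t₀,t₁]` with `0 ≤ v̄ < 1` and
`v̄' + (1 - v̄)² ≤ 0` there, then `t₁ - t₀ ≤ v̄(t₀)/(1 - v̄(t₀))`. -/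
theorem guaranteed_time_bound (t0 t1 : ℝ) (h01 : t0 ≤ t1) (vbar vbar' : ℝ → ℝ)
    (hd : ∀ t ∈ Set.Icc t0 t1, HasDerivWithinAt vbar (vbar' t) (Set.Icc t0 t1) t)
    (h0 : ∀ t ∈ Set.Icc t0 t1, 0 ≤ vbar t)
    (h1 : ∀ t ∈ Set.Icc t0 t1, vbar t < 1)
    (hineq : ∀ t ∈ Set.Icc t0 t1, vbar' t + (1 - vbar t) ^ 2 ≤ 0) :
    t1 - t0 ≤ vbar t0 / (1 - vbar t0) := by
  have ht0 : t0 ∈ Set.Icc t0 t1 := Set.left_mem_Icc.2 h01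
  have ht1 : t1 ∈ Set.Icc t0 t1 := Set.right_mem_Icc.2 h01
  have hpos : ∀ t ∈ Set.Icc t0 t1, 0 < 1 - vbar t := fun t ht => sub_pos.2 (h1 t ht)
  have hanti : AntitoneOn (fun t => (1 - vbar t)⁻¹ + t) (Set.Icc t0 t1) :=
    antitoneOn_inv_add_id_of_sq_le_deriv (convex_Icc t0 t1)
      (w' := fun t => -vbar' t) (fun t ht => (hd t ht).const_sub 1)
      (fun t ht => (hpos t ht).ne') (fun t ht => by linarith [hineq t ht])
  have hdecay := hanti ht0 ht1 h01
  have hinv_ge_one : 1 ≤ (1 - vbar t1)⁻¹ :=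
    one_le_inv₀ (hpos t1 ht1) |>.2 (by linarith [h0 t1 ht1])
  have hrewrite : vbar t0 / (1 - vbar t0) = (1 - vbar t0)⁻¹ - 1 := by
    field_simp [(hpos t0 ht0).ne']
    ring
  simp only at hdecay
  linarith
end

section
/- If S ∈ ℝ^{(n+1)×(n+1)} is symmetric and the augmented quadratic form satisfies (v,1)ᵀ S (w,1) ≥ γ vᵀw for suitable pairing over all vertices so that the relaxed matrix inequality X̄ᵀ(S - γ diag(Iₙ,0))X̄ ≥ W holds for a nonnegative-entry symmetric W ≥ 0, then for every x in the simplex conv(v₁,…,v_{n+1}), (x,1)ᵀ S (x,1) ≥ γ ‖x‖². -/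
open Matrix

/-!
Write `x = ∑ βᵢ vᵢ` with barycentric coordinates `β ≥ 0`, `∑ βᵢ = 1`. The columns of `X̄` are the
augmented vertices `(vᵢ, 1)`, so `X̄ β = (x, 1)`, and testing the semidefinite inequality on `β`
gives `(x, 1)ᵀ (S - γ diag(Iₙ, 0)) (x, 1) ≥ βᵀ W β ≥ 0`, the last step because `β` and `W` are
entrywise nonnegative.
-/

theorem exists_mem_stdSimplex_sum_smul_eq {R E ι : Type*} [Field R] [LinearOrder R]
    [IsStrictOrderedRing R] [AddCommGroup E] [Module R E] [Fintype ι] {v : ι → E} {x : E}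
    (hx : x ∈ convexHull R (Set.range v)) : ∃ β ∈ stdSimplex R ι, ∑ i, β i • v i = x := by
  classical
  have hv : Set.range v = Fintype.linearCombination R v '' Set.range fun i ↦ Pi.single i 1 := by
    rw [← Set.range_comp]
    congr
    funext i
    simp
  rw [hv, ← LinearMap.image_convexHull, convexHull_rangle_single_eq_stdSimplex] at hx
  obtain ⟨β, hβ, rfl⟩ := hx
  exact ⟨β, hβ, (Fintype.linearCombination_apply R v β).symm⟩

def augment {R : Type*} [One R] {n : ℕ} (x : Fin n → R) : Fin (n + 1) → R :=
  fun k ↦ if h : (k : ℕ) < n then x ⟨k, h⟩ else 1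

section augment

variable {R : Type*} [CommRing R] {n : ℕ}

theorem augment_sum_smul {ι : Type*} [Fintype ι] (v : ι → Fin n → R) {β : ι → R}
    (hβ : ∑ i, β i = 1) : augment (∑ i, β i • v i) = ∑ i, β i • augment (v i) := by
  funext k
  by_cases h : (k : ℕ) < n <;> simp [augment, h, Finset.sum_apply, hβ]

theorem mulVec_eq_augment_sum_smul {ι : Type*} [Fintype ι] {v : ι → Fin n → R}
    {X : Matrix (Fin (n + 1)) ι R} (hX : ∀ i j, X i j = augment (v j) i) {β : ι → R}
    (hβ : ∑ i, β i = 1) : X *ᵥ β = augment (∑ i, β i • v i) := by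
  rw [augment_sum_smul v hβ]
  funext k
  simp [mulVec, dotProduct, Finset.sum_apply, hX, mul_comm]

theorem augment_dotProduct_mulVec_augment {D : Matrix (Fin (n + 1)) (Fin (n + 1)) R}
    (hD : ∀ i j, D i j = if i = j ∧ (i : ℕ) < n then 1 else 0) (x : Fin n → R) :
    augment x ⬝ᵥ D *ᵥ augment x = x ⬝ᵥ x := by
  have hdiag : D = diagonal fun k : Fin (n + 1) ↦ if (k : ℕ) < n then 1 else 0 := by
    ext i j
    rw [hD]
    by_cases hij : i = j <;> simp [hij]
  simp [hdiag, mulVec_diagonal, dotProduct, Fin.sum_univ_castSucc, augment]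

end augment

theorem dotProduct_mulVec_le_of_posSemidef_sub {m n : Type*} [Fintype m] [Fintype n]
    {X : Matrix m n ℝ} {A : Matrix m m ℝ} {W : Matrix n n ℝ}
    (h : (Xᵀ * A * X - W).PosSemidef) (β : n → ℝ) :
    β ⬝ᵥ W *ᵥ β ≤ X *ᵥ β ⬝ᵥ A *ᵥ (X *ᵥ β) := by
  have := h.dotProduct_mulVec_nonneg β
  rw [star_trivial, sub_mulVec, dotProduct_sub, Matrix.mul_assoc, ← mulVec_mulVec,
    ← mulVec_mulVec, dotProduct_mulVec, vecMul_transpose] at this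
  linarith

theorem quadratic_lower_bound_on_simplex_general (n : ℕ)
    (v : Fin (n + 1) → (Fin n → ℝ))
    (X : Matrix (Fin (n + 1)) (Fin (n + 1)) ℝ)
    (hX : ∀ (i : Fin (n + 1)) (j : Fin (n + 1)),
      X i j = if h : (i : ℕ) < n then v j ⟨i, h⟩ else 1)
    (S : Matrix (Fin (n + 1)) (Fin (n + 1)) ℝ)
    (γ : ℝ)
    (D : Matrix (Fin (n + 1)) (Fin (n + 1)) ℝ)
    (hD : ∀ i j, D i j = if i = j ∧ (i : ℕ) < n then 1 else 0)
    (W : Matrix (Fin (n + 1)) (Fin (n + 1)) ℝ)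
    (hWnn : ∀ i j, 0 ≤ W i j)
    (hPSD : (Xᵀ * (S - γ • D) * X - W).PosSemidef) :
    ∀ x ∈ convexHull ℝ (Set.range v),
      γ * (x ⬝ᵥ x) ≤
        (fun k : Fin (n + 1) => if h : (k : ℕ) < n then x ⟨k, h⟩ else 1) ⬝ᵥ
          S.mulVec (fun k : Fin (n + 1) => if h : (k : ℕ) < n then x ⟨k, h⟩ else 1) := by
  intro x hx
  obtain ⟨β, ⟨hβ_nonneg, hβ_sum⟩, rfl⟩ := exists_mem_stdSimplex_sum_smul_eq hx
  have hW : 0 ≤ β ⬝ᵥ W *ᵥ β :=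
    dotProduct_nonneg_of_nonneg hβ_nonneg fun i ↦ dotProduct_nonneg_of_nonneg (hWnn i) hβ_nonneg
  have hPSD_at_β := dotProduct_mulVec_le_of_posSemidef_sub hPSD β
  rw [mulVec_eq_augment_sum_smul hX hβ_sum, sub_mulVec, dotProduct_sub, smul_mulVec,
    dotProduct_smul, augment_dotProduct_mulVec_augment hD, smul_eq_mul] at hPSD_at_β
  change _ ≤ augment _ ⬝ᵥ S *ᵥ augment _
  linarith

/-- If the relaxed matrix inequality `X̄ᵀ(S - γ diag(Iₙ,0))X̄ - W ⪰ 0` holds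
for a symmetric `W` with nonnegative entries, then the augmented quadratic
form dominates `γ‖x‖²` on the simplex. -/
theorem quadratic_lower_bound_on_simplex (n : ℕ)
    (v : Fin (n + 1) → (Fin n → ℝ)) (hv : AffineIndependent ℝ v)
    (X : Matrix (Fin (n + 1)) (Fin (n + 1)) ℝ)
    (hX : ∀ (i : Fin (n + 1)) (j : Fin (n + 1)),
      X i j = if h : (i : ℕ) < n then v j ⟨i, h⟩ else 1)
    (S : Matrix (Fin (n + 1)) (Fin (n + 1)) ℝ) (hS : S.IsSymm)
    (γ : ℝ) (hγ : 0 < γ)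
    (D : Matrix (Fin (n + 1)) (Fin (n + 1)) ℝ)
    (hD : ∀ i j, D i j = if i = j ∧ (i : ℕ) < n then 1 else 0)
    (W : Matrix (Fin (n + 1)) (Fin (n + 1)) ℝ) (hW : W.IsSymm)
    (hWnn : ∀ i j, 0 ≤ W i j)
    (hPSD : (Xᵀ * (S - γ • D) * X - W).PosSemidef) :
    ∀ x ∈ convexHull ℝ (Set.range v),
      γ * (x ⬝ᵥ x) ≤
        (fun k : Fin (n + 1) => if h : (k : ℕ) < n then x ⟨k, h⟩ else 1) ⬝ᵥ
          S.mulVec (fun k : Fin (n + 1) => if h : (k : ℕ) < n then x ⟨k, h⟩ else 1) :=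
  quadratic_lower_bound_on_simplex_general n v X hX S γ D hD W hWnn hPSD
end
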